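/- arXiv:0805.4147 — 4 statements merged into one kernel-verified Lean document; each statement's English description precedes it below -/
import Mathlib

section
/- Let G be a planar graph with f internal faces, and let S be a set of internal faces whose removal leaves adjacent face components; suppose no edge lies on the boundary of two different adjacent face components and every boundary edge of a component is an edge of some face of S or of the outer face (a triangle). If each face of S has at most 3 edges, then the number of adjacent face components of G \ S is at most 3|S| + 3. -/
/-- Let `S` be a set of internal faces of a planar graph, each face of `S` having at
most 3 edges (`sEdges`), and let the outer face be a triangle with edge set `outer`
of at most 3 edges.  Suppose removing `S` leaves adjacent face components indexed by
the finite type `C`, where each component `c` has a nonempty boundary edge set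
`boundary c`, no edge lies on the boundary of two different components, and every
boundary edge is an edge of some face of `S` or of the outer face.  Then the number
of adjacent face components is at most `3|S| + 3`. -/
theorem num_adjacent_face_components_le {F E C : Type} [Fintype C] [DecidableEq E]
    (S : Finset F) (sEdges : F → Finset E) (outer : Finset E)
    (boundary : C → Finset E)
    (houter : outer.card ≤ 3)
    (hS : ∀ s ∈ S, (sEdges s).card ≤ 3)
    (hne : ∀ c : C, (boundary c).Nonempty)
    (hdisj : ∀ c c' : C, c ≠ c' → Disjoint (boundary c) (boundary c'))
    (hsub : ∀ c : C, boundary c ⊆ outer ∪ S.biUnion sEdges) :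
    Fintype.card C ≤ 3 * S.card + 3 := by
  classical
  set T := outer ∪ S.biUnion sEdges with hT
  have hf : ∀ c : C, (hne c).choose ∈ T := fun c => hsub c (hne c).choose_spec
  have hinj : Function.Injective (fun c : C => (⟨(hne c).choose, hf c⟩ : T)) := by
    intro c c' h
    by_contra hcc
    have he : (hne c).choose = (hne c').choose := congrArg Subtype.val h
    exact Finset.disjoint_left.mp (hdisj c c' hcc) (hne c).choose_spec
      (he ▸ (hne c').choose_spec)
  calc Fintype.card C ≤ Fintype.card T := Fintype.card_le_of_injective _ hinj
    _ = T.card := Fintype.card_coe T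
    _ ≤ outer.card + (S.biUnion sEdges).card := Finset.card_union_le _ _
    _ ≤ 3 + ∑ s ∈ S, (sEdges s).card := by
        gcongr
        exact Finset.card_biUnion_le
    _ ≤ 3 + ∑ s ∈ S, 3 := by
        gcongr with s hs
        exact hS s hs
    _ = 3 + 3 * S.card := by rw [Finset.sum_const, smul_eq_mul, mul_comm]
    _ = 3 * S.card + 3 := by ring
end

section
/- Let G be a planar triangulation with internal-face set partitioned into a separator S of triangular faces and adjacent face components. Then the sum over all boundary vertices of their duplication degrees (the number of components each belongs to) is at most 3|S| plus the number of edges of the outer face, hence O(|S|). -/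
/-- Let the internal faces of a planar triangulation be partitioned into a separator
`S` of triangular faces (each with at most 3 edges `sEdges`) and adjacent face
components indexed by `C`, where `bEdges c` is the set of boundary edges of component
`c`.  No edge lies on the boundaries of two components, and every boundary edge is an
edge of a face of `S` or of the outer face (edge set `outer`).  The duplication
degree `dup v` of a boundary vertex counts the components it belongs to, and (as the
boundary of each component is a collection of simple cycles) the sum of the
duplication degrees over the boundary vertices equals the total number of boundary
edges.  Then this sum is at most `3|S| + |outer|`, hence `O(|S|)`. -/
theorem sum_duplication_degrees_le {F E V C : Type} [Fintype C] [DecidableEq E]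
    (S : Finset F) (sEdges : F → Finset E) (outer : Finset E)
    (bEdges : C → Finset E)
    (boundaryVerts : Finset V) (dup : V → ℕ)
    (hS : ∀ s ∈ S, (sEdges s).card ≤ 3)
    (hdisj : ∀ c c' : C, c ≠ c' → Disjoint (bEdges c) (bEdges c'))
    (hsub : ∀ c : C, bEdges c ⊆ outer ∪ S.biUnion sEdges)
    (hsum : ∑ v ∈ boundaryVerts, dup v = ∑ c : C, (bEdges c).card) :
    ∑ v ∈ boundaryVerts, dup v ≤ 3 * S.card + outer.card := by
  rw [hsum]
  have h1 : ∑ c : C, (bEdges c).card = (Finset.univ.biUnion bEdges).card := by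
    rw [Finset.card_biUnion (fun c _ c' _ h => hdisj c c' h)]
  have h2 : (Finset.univ.biUnion bEdges) ⊆ outer ∪ S.biUnion sEdges := by
    intro e he
    obtain ⟨c, _, hc⟩ := Finset.mem_biUnion.mp he
    exact hsub c hc
  calc ∑ c : C, (bEdges c).card = (Finset.univ.biUnion bEdges).card := h1
    _ ≤ (outer ∪ S.biUnion sEdges).card := Finset.card_le_card h2
    _ ≤ outer.card + (S.biUnion sEdges).card := Finset.card_union_le _ _
    _ ≤ outer.card + ∑ s ∈ S, (sEdges s).card :=
        Nat.add_le_add_left (Finset.card_biUnion_le) _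
    _ ≤ outer.card + ∑ s ∈ S, 3 := Nat.add_le_add_left (Finset.sum_le_sum hS) _
    _ = outer.card + 3 * S.card := by rw [Finset.sum_const, smul_eq_mul]; ring
    _ = 3 * S.card + outer.card := Nat.add_comm _ _
end

section
/- Let A be a sequence of length m over an alphabet, and define a bit vector C of length m by C[k] = 1 iff position k is the first occurrence of the value A[k] in A. Let q be the number of zeros in C and let D[1..q] list, in order, the values A[k] for positions k with C[k] = 0. Then A is completely determined by C, D, and the map sending j to the value of the j-th distinct first occurrence; in particular A[k] can be recovered as: if C[k]=1 then the (rank of 1s up to k)-th distinct value, else D[rank of 0s up to k]. -/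
/-! If `p` is any predicate on positions and `p k` holds, then exactly `rank - 1` positions
before `k` satisfy `p`, so `k` sits at index `rank - 1` of the positions filtered by `p`.
The two halves of the encoding are the instances `p = C` and `p = ¬C`. -/

/-- `isFirstB A k` is true iff position `k` is the first occurrence of the value
`A k` in the sequence `A`. -/
def isFirstB {α : Type} [DecidableEq α] {m : ℕ} (A : Fin m → α) (k : Fin m) : Bool :=
  decide (∀ j : Fin m, j < k → A j ≠ A k)

/-- `rank1 A k` = number of 1s (first occurrences) in positions `≤ k`. -/
def rank1 {α : Type} [DecidableEq α] {m : ℕ} (A : Fin m → α) (k : Fin m) : ℕ :=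
  (Finset.univ.filter (fun j : Fin m => j ≤ k ∧ isFirstB A j = true)).card

/-- `rank0 A k` = number of 0s (repeated occurrences) in positions `≤ k`. -/
def rank0 {α : Type} [DecidableEq α] {m : ℕ} (A : Fin m → α) (k : Fin m) : ℕ :=
  (Finset.univ.filter (fun j : Fin m => j ≤ k ∧ isFirstB A j = false)).card

/-- The list of distinct values of `A`, in order of their first occurrences. -/
def Flist {α : Type} [DecidableEq α] {m : ℕ} (A : Fin m → α) : List α :=
  ((List.finRange m).filter (fun j => isFirstB A j)).map A

/-- The list of values of `A` at non-first-occurrence positions, in order. -/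
def Dlist {α : Type} [DecidableEq α] {m : ℕ} (A : Fin m → α) : List α :=
  ((List.finRange m).filter (fun j => !isFirstB A j)).map A

namespace List

variable {β : Type*} {p : β → Bool}

theorem getElem?_filter_append_cons (L R : List β) {x : β} (hx : p x) :
    ((L ++ x :: R).filter p)[L.countP p]? = some x := by
  simp [filter_append, hx, countP_eq_length_filter]

theorem getElem?_filter_countP_take {l : List β} {i : ℕ} (hi : i < l.length) (hp : p l[i]) :
    (l.filter p)[(l.take i).countP p]? = some l[i] := by
  have hsplit : l.take i ++ l[i] :: l.drop (i + 1) = l := by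
    rw [← drop_eq_getElem_cons hi, take_append_drop]
  have := getElem?_filter_append_cons (l.take i) (l.drop (i + 1)) hp
  rwa [hsplit] at this

theorem getElem?_filter_countP_take_add_one_sub_one {l : List β} {i : ℕ} (hi : i < l.length)
    (hp : p l[i]) :
    (l.filter p)[(l.take (i + 1)).countP p - 1]? = some l[i] := by
  rw [take_add_one, countP_append, getElem?_eq_getElem hi]
  simpa [hp] using getElem?_filter_countP_take hi hp

theorem mem_take_finRange {m n : ℕ} {j : Fin m} :
    j ∈ (finRange m).take n ↔ (j : ℕ) < n := by
  simp only [mem_take_iff_getElem, getElem_finRange, length_finRange, lt_min_iff]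
  exact ⟨fun ⟨_, ⟨h, _⟩, hj⟩ => hj ▸ h, fun h => ⟨j, ⟨h, j.isLt⟩, rfl⟩⟩

end List

theorem Fin.card_filter_le_eq_countP_take_finRange {m : ℕ} (p : Fin m → Bool) (k : Fin m) :
    (Finset.univ.filter fun j : Fin m => j ≤ k ∧ p j = true).card
      = ((List.finRange m).take (k + 1)).countP p := by
  have hnd : (((List.finRange m).take (k + 1)).filter p).Nodup :=
    ((List.nodup_finRange m).sublist (List.take_sublist _ _)).filter p
  rw [List.countP_eq_length_filter, ← List.toFinset_card_of_nodup hnd]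
  congr 1
  ext j
  rw [Finset.mem_filter_univ, List.mem_toFinset, List.mem_filter, List.mem_take_finRange,
    Nat.lt_add_one_iff, Fin.val_fin_le]

theorem getElem?_map_filter_finRange_card_le_sub_one {α : Type*} {m : ℕ} (A : Fin m → α)
    {p : Fin m → Bool} {k : Fin m} (hk : p k) :
    (((List.finRange m).filter p).map A)[
        (Finset.univ.filter fun j : Fin m => j ≤ k ∧ p j = true).card - 1]? = some (A k) := by
  have hlen : (k : ℕ) < (List.finRange m).length := by simp
  have hget : (List.finRange m)[(k : ℕ)] = k := by simp
  rw [Fin.card_filter_le_eq_countP_take_finRange, List.getElem?_map,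
    List.getElem?_filter_countP_take_add_one_sub_one hlen (by rwa [hget]), hget, Option.map_some]

/-- First-occurrence encoding: a sequence `A` is completely determined by the bit
vector `C` of first occurrences (via `isFirstB`), the list `D` of values at non-first
positions, and the list of distinct first-occurrence values; namely `A k` is
recovered as the `rank1(k)`-th distinct value when `C[k] = 1`, and as
`D[rank0(k)]` when `C[k] = 0`. -/
theorem first_occurrence_encoding {α : Type} [DecidableEq α] {m : ℕ}
    (A : Fin m → α) (k : Fin m) :
    (isFirstB A k = true → (Flist A)[rank1 A k - 1]? = some (A k)) ∧
    (isFirstB A k = false → (Dlist A)[rank0 A k - 1]? = some (A k)) := by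
  refine ⟨fun h => getElem?_map_filter_finRange_card_le_sub_one A h, fun h => ?_⟩
  have := getElem?_map_filter_finRange_card_le_sub_one A (p := fun j => !isFirstB A j)
    (by simpa using h)
  simpa [Dlist, rank0] using this
end

section
/- Let T be a binary tree (each node has at most 2 children) with n nodes, and let l < n be a positive integer. Then T can be partitioned into connected subtrees each with at least l nodes (with the exception of at most one subtree) and at most 3l nodes. -/
/-!
Root the graph at a vertex `r` and call `w` a descendant of `v` when `v` lies on a shortest path
from `r` to `w`. The descendants of `v` induce a connected subgraph, and so do the remaining
vertices when `v ≠ r`. They are covered by `v` and the descendants of its children, and `v` has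
at most three children, at most two when `v ≠ r` because its parent is a further neighbour.
A deepest `v` with at least `l` descendants therefore has at most `1 + 2(l - 1) < 2l` of them,
and `v ≠ r` as soon as there are more than `3l` vertices. Cutting off such a set and repeating
on the connected remainder until it has at most `3l` vertices yields parts of sizes in `[l, 3l]`.
-/

open Finset

namespace SimpleGraph

variable {V : Type*} {G : SimpleGraph V}

lemma connected_induce_of_forall_walk {s : Set V} {a : V} (ha : a ∈ s)
    (h : ∀ w ∈ s, ∃ p : G.Walk a w, ∀ x ∈ p.support, x ∈ s) : (G.induce s).Connected := by
  rw [connected_iff_exists_forall_reachable]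
  refine ⟨⟨a, ha⟩, fun ⟨w, hw⟩ => ?_⟩
  obtain ⟨p, hp⟩ := h w hw
  exact (p.induce s hp).reachable

lemma connected_induce_image_val {s : Set V} {t : Set s}
    (h : ((G.induce s).induce t).Connected) : (G.induce (Subtype.val '' t)).Connected :=
  h.map ⟨fun x => ⟨x.1.1, x.1, x.2, rfl⟩, id⟩ (by rintro ⟨_, y, hy, rfl⟩; exact ⟨⟨y, hy⟩, rfl⟩)

lemma Walk.dist_add_dist_of_mem_support {u w x : V} {p : G.Walk u w}
    (hp : p.length = G.dist u w) (hx : x ∈ p.support) :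
    G.dist u x + G.dist x w = G.dist u w := by
  classical
  rw [← length_eq_dist_of_subwalk hp (p.isSubwalk_takeUntil hx),
    ← length_eq_dist_of_subwalk hp (p.isSubwalk_dropUntil hx), ← hp, ← length_append,
    take_spec]

lemma Connected.exists_adj_dist_add_one (hG : G.Connected) {u w : V} (h : u ≠ w) :
    ∃ c, G.Adj u c ∧ G.dist c w + 1 = G.dist u w := by
  obtain ⟨p, hp⟩ := hG.exists_walk_length_eq_dist u w
  cases p with
  | nil => exact absurd rfl h
  | @cons _ c _ hadj q =>
    refine ⟨c, hadj, le_antisymm ?_ ?_⟩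
    · rw [← hp, Walk.length_cons]
      exact Nat.add_le_add_right (dist_le q) 1
    · have := hG.dist_triangle (u := u) (v := c) (w := w)
      rw [dist_eq_one_iff_adj.mpr hadj] at this
      omega

variable [Fintype V] {r v w : V}

noncomputable def descendants (G : SimpleGraph V) (r v : V) : Finset V :=
  {w | G.dist r v + G.dist v w = G.dist r w}

noncomputable def children (G : SimpleGraph V) [DecidableRel G.Adj] (r v : V) : Finset V :=
  {c ∈ G.neighborFinset v | G.dist r c = G.dist r v + 1}

@[simp]
lemma mem_descendants : w ∈ G.descendants r v ↔ G.dist r v + G.dist v w = G.dist r w := by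
  simp [descendants]

lemma descendants_self : G.descendants r r = univ := by
  ext
  simp

lemma root_notMem_descendants (hG : G.Connected) (hv : v ≠ r) : r ∉ G.descendants r v := by
  rw [mem_descendants, dist_self]
  intro h
  exact hv ((hG.dist_eq_zero_iff).mp (by omega)).symm

lemma connected_induce_descendants (hG : G.Connected) (r v : V) :
    (G.induce (G.descendants r v : Set V)).Connected := by
  refine connected_induce_of_forall_walk (a := v) (by simp) fun w hw => ?_
  obtain ⟨p, hp⟩ := hG.exists_walk_length_eq_dist v w
  refine ⟨p, fun x hx => ?_⟩
  have := p.dist_add_dist_of_mem_support hp hx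
  have := hG.dist_triangle (u := r) (v := x) (w := w)
  have := hG.dist_triangle (u := r) (v := v) (w := x)
  simp only [mem_coe, mem_descendants] at hw ⊢
  omega

lemma connected_induce_compl_descendants (hG : G.Connected) (hv : v ≠ r) :
    (G.induce (↑(G.descendants r v) : Set V)ᶜ).Connected := by
  refine connected_induce_of_forall_walk (a := r)
    (by simpa using root_notMem_descendants hG hv) fun w hw => ?_
  obtain ⟨p, hp⟩ := hG.exists_walk_length_eq_dist r w
  refine ⟨p, fun x hx hxv => hw ?_⟩
  have := p.dist_add_dist_of_mem_support hp hx
  have := hG.dist_triangle (u := r) (v := v) (w := w)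
  have := hG.dist_triangle (u := v) (v := x) (w := w)
  simp only [mem_coe, mem_descendants] at hxv ⊢
  omega

variable [DecidableRel G.Adj]

lemma descendants_subset_insert_biUnion_children [DecidableEq V] (hG : G.Connected) (r v : V) :
    G.descendants r v ⊆ insert v ((G.children r v).biUnion (G.descendants r)) := by
  intro w hw
  rcases eq_or_ne v w with rfl | hvw
  · exact mem_insert_self _ _
  obtain ⟨c, hvc, hcw⟩ := hG.exists_adj_dist_add_one hvw
  have h1 := hG.dist_triangle (u := r) (v := v) (w := c)
  have h2 := hG.dist_triangle (u := r) (v := c) (w := w)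
  rw [dist_eq_one_iff_adj.mpr hvc] at h1
  rw [mem_descendants] at hw
  refine mem_insert_of_mem (mem_biUnion.mpr ⟨c, ?_, ?_⟩)
  · simp only [children, mem_filter, mem_neighborFinset]
    exact ⟨hvc, by omega⟩
  · rw [mem_descendants]
    omega

lemma card_descendants_le (hG : G.Connected) (r v : V) :
    #(G.descendants r v) ≤ 1 + ∑ c ∈ G.children r v, #(G.descendants r c) := by
  classical
  calc #(G.descendants r v)
      _ ≤ #(insert v ((G.children r v).biUnion (G.descendants r))) :=
        card_le_card (descendants_subset_insert_biUnion_children hG r v)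
      _ ≤ 1 + #((G.children r v).biUnion (G.descendants r)) := by
        rw [add_comm]
        exact card_insert_le _ _
      _ ≤ 1 + ∑ c ∈ G.children r v, #(G.descendants r c) := by
        grw [card_biUnion_le]

lemma card_children_le_degree (r v : V) : #(G.children r v) ≤ G.degree v :=
  card_neighborFinset_eq_degree G v ▸ card_filter_le _ _

lemma card_children_lt_degree (hG : G.Connected) (hv : v ≠ r) :
    #(G.children r v) < G.degree v := by
  obtain ⟨c, hvc, hcr⟩ := hG.exists_adj_dist_add_one hv
  rw [← card_neighborFinset_eq_degree]
  refine card_lt_card (filter_ssubset.mpr ⟨c, by simpa using hvc, ?_⟩)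
  rw [dist_comm (u := r), dist_comm (u := r)]
  omega

theorem Connected.exists_connected_split (hG : G.Connected) (hdeg : ∀ v, G.degree v ≤ 3)
    {l : ℕ} (hl : 1 ≤ l) (hcard : 3 * l < Fintype.card V) :
    ∃ S : Finset V, l ≤ #S ∧ #S ≤ 2 * l ∧
      (G.induce (S : Set V)).Connected ∧ (G.induce (S : Set V)ᶜ).Connected := by
  obtain ⟨r⟩ := hG.nonempty
  have hr : r ∈ ({v | l ≤ #(G.descendants r v)} : Finset V) := by
    simp only [mem_filter, mem_univ, true_and, descendants_self, card_univ]
    omega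
  obtain ⟨v, hv, hdeepest⟩ := exists_max_image _ (G.dist r) ⟨r, hr⟩
  have hchild : ∀ c ∈ G.children r v, #(G.descendants r c) ≤ l - 1 := by
    intro c hc
    by_contra! h
    have := hdeepest c (by simp only [mem_filter, mem_univ, true_and]; omega)
    have := (mem_filter.mp hc).2
    omega
  have hbound : #(G.descendants r v) ≤ 1 + #(G.children r v) * (l - 1) := by
    grw [card_descendants_le hG r v, sum_le_card_nsmul _ _ _ hchild, smul_eq_mul]
  have hvr : v ≠ r := by
    rintro rfl
    have hchildren := Nat.mul_le_mul_right (l - 1) ((card_children_le_degree v v).trans (hdeg v))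
    rw [descendants_self, card_univ] at hbound
    omega
  have hchildren := Nat.mul_le_mul_right (l - 1)
    (Nat.le_of_lt_succ ((card_children_lt_degree hG hvr).trans_le (hdeg v)))
  exact ⟨_, (mem_filter.mp hv).2, by omega, connected_induce_descendants hG r v,
    connected_induce_compl_descendants hG hvr⟩

theorem exists_connected_split_of_connected_induce [DecidableEq V]
    (hdeg : ∀ v, G.degree v ≤ 3) {l : ℕ} (hl : 1 ≤ l) {A : Finset V}
    (hA : (G.induce (A : Set V)).Connected) (hcard : 3 * l < #A) :
    ∃ S ⊆ A, l ≤ #S ∧ #S ≤ 2 * l ∧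
      (G.induce (S : Set V)).Connected ∧ (G.induce (↑(A \ S) : Set V)).Connected := by
  classical
  obtain ⟨S, hlS, hSl, hS, hSc⟩ := hA.exists_connected_split
    (fun v => ((Embedding.induce _).toCopy.degree_le v).trans (hdeg v)) hl (by simpa using hcard)
  refine ⟨S.map (.subtype _), fun x hx => ?_, by simpa, by simpa, ?_, ?_⟩
  · obtain ⟨y, -, rfl⟩ := mem_map.mp hx
    exact y.2
  · rw [coe_map]
    exact connected_induce_image_val hS
  · rw [coe_sdiff, coe_map, Function.Embedding.coe_subtype, ← Set.image_val_compl]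
    exact connected_induce_image_val hSc

theorem exists_finpartition_connected_induce [DecidableEq V]
    (hdeg : ∀ v, G.degree v ≤ 3) {l : ℕ} (hl : 1 ≤ l) {A : Finset V}
    (hA : (G.induce (A : Set V)).Connected) (hlA : l ≤ #A) :
    ∃ P : Finpartition A, ∀ p ∈ P.parts, l ≤ #p ∧ #p ≤ 3 * l ∧ (G.induce (p : Set V)).Connected := by
  induction A using Finset.strongInduction with
  | H A ih =>
  by_cases hsmall : #A ≤ 3 * l
  · refine ⟨.indiscrete (card_pos.mp (by omega)).ne_empty, ?_⟩
    simp only [Finpartition.indiscrete_parts, mem_singleton, forall_eq]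
    exact ⟨hlA, hsmall, hA⟩
  obtain ⟨S, hSA, hlS, hSl, hS, hAS⟩ :=
    exists_connected_split_of_connected_induce hdeg hl hA (by omega)
  have hSne : S.Nonempty := card_pos.mp (by omega)
  obtain ⟨P, hP⟩ := ih (A \ S) (sdiff_ssubset hSA hSne) hAS
    (by rw [card_sdiff_of_subset hSA]; omega)
  refine ⟨P.extend hSne.ne_empty sdiff_disjoint (sdiff_union_of_subset hSA), ?_⟩
  simp only [Finpartition.extend_parts, mem_insert, forall_eq_or_imp]
  exact ⟨⟨hlS, by omega, hS⟩, hP⟩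

end SimpleGraph

theorem binary_tree_partition_general {V : Type} [Fintype V] [DecidableEq V]
    (T : SimpleGraph V) [DecidableRel T.Adj] (hT : T.IsTree)
    (hdeg : ∀ v : V, T.degree v ≤ 3)
    (n l : ℕ) (hn : Fintype.card V = n) (hl : 1 ≤ l) (hln : l < n) :
    ∃ P : Finpartition (Finset.univ : Finset V),
      (∀ part ∈ P.parts, part.card ≤ 3 * l) ∧
      (∀ part ∈ P.parts, (SimpleGraph.induce (↑part : Set V) T).Connected) ∧
      (P.parts.filter (fun part => part.card < l)).card ≤ 1 := by
  have hconn : (T.induce (↑(univ : Finset V) : Set V)).Connected := by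
    rw [coe_univ]
    exact (SimpleGraph.induceUnivIso T).connected_iff.mpr hT.connected
  obtain ⟨P, hP⟩ := SimpleGraph.exists_finpartition_connected_induce hdeg hl hconn (by rw [card_univ]; omega)
  refine ⟨P, fun p hp => (hP p hp).2.1, fun p hp => (hP p hp).2.2, ?_⟩
  rw [filter_false_of_mem fun p hp => not_lt.mpr (hP p hp).1, card_empty]
  exact zero_le_one

/-- Let `T` be a (rooted) binary tree with `n` vertices: `T` is a tree in which every
vertex has degree at most 3 and the root `r` has degree at most 2 (so every node has
at most 2 children).  For any positive integer `l < n`, the vertex set of `T` can be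
partitioned into parts, each inducing a connected subtree, such that every part has
at most `3l` vertices and all parts except at most one have at least `l` vertices. -/
theorem binary_tree_partition {V : Type} [Fintype V] [DecidableEq V]
    (T : SimpleGraph V) [DecidableRel T.Adj] (hT : T.IsTree)
    (r : V) (hdeg : ∀ v : V, T.degree v ≤ 3) (hroot : T.degree r ≤ 2)
    (n l : ℕ) (hn : Fintype.card V = n) (hl : 1 ≤ l) (hln : l < n) :
    ∃ P : Finpartition (Finset.univ : Finset V),
      (∀ part ∈ P.parts, part.card ≤ 3 * l) ∧
      (∀ part ∈ P.parts, (SimpleGraph.induce (↑part : Set V) T).Connected) ∧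
      (P.parts.filter (fun part => part.card < l)).card ≤ 1 :=
  binary_tree_partition_general T hT hdeg n l hn hl hln
end
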